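/- arXiv:1302.5446 — 2 statements merged into one kernel-verified Lean document; each statement's English description precedes it below -/
import Mathlib

section
/- Let (X,<) be a linearly ordered set, η ∈ {0,1}^{d+1}, and 𝒞 the collection of subsets of X not inducing η. Then for every A ⊆ X with |A| = d+1, the unique subset of A missing from the trace 𝒞|^A is {a_i ∈ A : η(i) = 1}, where a_0 < ⋯ < a_d enumerates A in increasing order. In other words, the forbidden label of 𝒞 on A is the subset of A coded by η. -/
open Set

variable {α : Type*}

/-- The trace of a set system on a set `A`. -/
def trace (𝒞 : Set (Set α)) (A : Set α) : Set (Set α) := {s | ∃ C ∈ 𝒞, s = C ∩ A}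

/-- `∑_{i=0}^{d} (n choose i)`. -/
def binLe (n d : ℕ) : ℕ := ∑ i ∈ Finset.range (d + 1), n.choose i

/-- `𝒞` shatters `A`. -/
def shatters (𝒞 : Set (Set α)) (A : Set α) : Prop := ∀ B ⊆ A, ∃ C ∈ 𝒞, C ∩ A = B

/-- `𝒞` is a `d`-maximum set system. -/
def isMaximum (𝒞 : Set (Set α)) (d : ℕ) : Prop :=
  ∀ A : Set α, A.Finite → (trace 𝒞 A).ncard = binLe A.ncard d

/-- There is a ladder of length `n` for `𝒞`. -/
def hasLadder (𝒞 : Set (Set α)) (n : ℕ) : Prop :=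
  ∃ (x : Fin n → α) (B : Fin n → Set α), (∀ j, B j ∈ 𝒞) ∧ ∀ i j, x i ∈ B j ↔ i < j

/-- `B` induces the binary string `μ`. -/
def induces [LinearOrder α] (B : Set α) {m : ℕ} (μ : Fin m → Bool) : Prop :=
  ∃ x : Fin m → α, StrictMono x ∧ ∀ j, x j ∈ B ↔ μ j = true


/-- `B` induces pattern `η` (on indices `0..m`) using witnesses inside `S`. -/
def inducesIn [LinearOrder α] (S B : Set α) (η : ℕ → Bool) (m : ℕ) : Prop :=
  ∃ x : ℕ → α, (∀ i j, i < j → j ≤ m → x i < x j) ∧ (∀ j ≤ m, x j ∈ S) ∧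
    ∀ j ≤ m, (x j ∈ B ↔ η j = true)

lemma key [LinearOrder α] : ∀ (t m : ℕ) (S : Set α) (η μ : ℕ → Bool) (a : ℕ → α),
    (∀ i j, i < j → j < t → a i < a j) → (∀ i < t, a i ∈ S) → t ≤ m + 1 →
    (t = m + 1 → ∃ j, j ≤ m ∧ μ j ≠ η j) →
    ∃ C, C ⊆ S ∧ (∀ i < t, (a i ∈ C ↔ μ i = true)) ∧ ¬ inducesIn S C η m := by
  intro t
  induction t with
  | zero =>
    intro m S η μ a _ _ _ _
    by_cases h : ∃ j, j ≤ m ∧ η j = true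
    · obtain ⟨j, hj, hηj⟩ := h
      refine ⟨∅, empty_subset _, fun i hi => absurd hi (Nat.not_lt_zero i), ?_⟩
      rintro ⟨x, -, -, hxB⟩
      exact absurd ((hxB j hj).mpr hηj) (notMem_empty _)
    · push_neg at h
      refine ⟨S, subset_rfl, fun i hi => absurd hi (Nat.not_lt_zero i), ?_⟩
      rintro ⟨x, -, hxS, hxB⟩
      have := (hxB 0 (Nat.zero_le m)).mp (hxS 0 (Nat.zero_le m))
      exact absurd this (by simpa using h 0 (Nat.zero_le m))
  | succ t IH =>
    intro m S η μ a hmono hS hle hside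
    have ha0S : a 0 ∈ S := hS 0 (Nat.succ_pos t)
    have hmono' : ∀ i j, i < j → j < t → a (i+1) < a (j+1) :=
      fun i j hij hj => hmono (i+1) (j+1) (by omega) (by omega)
    have hS' : ∀ i < t, a (i+1) ∈ S ∩ Set.Ioi (a 0) :=
      fun i hi => ⟨hS (i+1) (by omega), hmono 0 (i+1) (by omega) (by omega)⟩
    by_cases he : μ 0 = η 0
    · -- first bits agree
      cases m with
      | zero =>
        have ht : t = 0 := by omega
        obtain ⟨j, hj, hdiff⟩ := hside (by omega)
        interval_cases j
        exact absurd he hdiff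
      | succ m' =>
        have hside' : t = m' + 1 → ∃ j, j ≤ m' ∧ (fun j => μ (j+1)) j ≠ (fun j => η (j+1)) j := by
          intro h
          obtain ⟨j, hj, hdiff⟩ := hside (by omega)
          have hj0 : j ≠ 0 := fun h0 => hdiff (h0 ▸ he)
          refine ⟨j - 1, by omega, ?_⟩
          have hjj : j - 1 + 1 = j := by omega
          simpa [hjj] using hdiff
        obtain ⟨C', hC'S, hC'tr, hC'ind⟩ := IH m' (S ∩ Set.Ioi (a 0))
          (fun j => η (j+1)) (fun j => μ (j+1)) (fun i => a (i+1)) hmono' hS'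
          (by omega) hside'
        have hC'Ioi : C' ⊆ Set.Ioi (a 0) := hC'S.trans inter_subset_right
        by_cases hb : η 0 = true
        · refine ⟨insert (a 0) C', insert_subset ha0S (hC'S.trans inter_subset_left), ?_, ?_⟩
          · intro i hi
            cases i with
            | zero => simp [he, hb]
            | succ i =>
              have hne0 : a (i+1) ≠ a 0 := ne_of_gt (hmono 0 (i+1) (by omega) hi)
              rw [mem_insert_iff]
              simpa [hne0] using hC'tr i (by omega)
          · rintro ⟨x, hxm, hxS, hxB⟩
            have hx0 : x 0 ∈ insert (a 0) C' := (hxB 0 (by omega)).mpr hb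
            have hx0ge : a 0 ≤ x 0 := by
              rcases mem_insert_iff.mp hx0 with h | h
              · exact le_of_eq h.symm
              · exact le_of_lt (hC'Ioi h)
            apply hC'ind
            refine ⟨fun j => x (j+1), fun i j hij hj => hxm (i+1) (j+1) (by omega) (by omega),
              fun j hj => ⟨hxS (j+1) (by omega),
                lt_of_le_of_lt hx0ge (hxm 0 (j+1) (by omega) (by omega))⟩, ?_⟩
            intro j hj
            have hgt : a 0 < x (j+1) :=
              lt_of_le_of_lt hx0ge (hxm 0 (j+1) (by omega) (by omega))
            have := hxB (j+1) (by omega)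
            rw [mem_insert_iff] at this
            simpa [ne_of_gt hgt] using this
        · have hb' : η 0 = false := by simpa using hb
          refine ⟨(S ∩ Set.Iio (a 0)) ∪ C',
            union_subset inter_subset_left (hC'S.trans inter_subset_left), ?_, ?_⟩
          · intro i hi
            cases i with
            | zero =>
              have h1 : a 0 ∉ Set.Iio (a 0) := by simp
              have h2 : a 0 ∉ C' := fun h => lt_irrefl _ (hC'Ioi h)
              simp [he, hb', h1, h2]
            | succ i =>
              have hlt : a 0 < a (i+1) := hmono 0 (i+1) (by omega) hi
              have h1 : a (i+1) ∉ Set.Iio (a 0) := by simp [not_lt.mpr (le_of_lt hlt)]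
              rw [mem_union]
              simpa [h1] using hC'tr i (by omega)
          · rintro ⟨x, hxm, hxS, hxB⟩
            have hx0 : x 0 ∉ (S ∩ Set.Iio (a 0)) ∪ C' := by
              intro h
              have := (hxB 0 (by omega)).mp h
              rw [hb'] at this; exact absurd this (by simp)
            have hx0ge : a 0 ≤ x 0 := by
              by_contra hlt
              exact hx0 (Or.inl ⟨hxS 0 (by omega), not_le.mp hlt⟩)
            apply hC'ind
            refine ⟨fun j => x (j+1), fun i j hij hj => hxm (i+1) (j+1) (by omega) (by omega),
              fun j hj => ⟨hxS (j+1) (by omega),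
                lt_of_le_of_lt hx0ge (hxm 0 (j+1) (by omega) (by omega))⟩, ?_⟩
            intro j hj
            have hgt : a 0 < x (j+1) :=
              lt_of_le_of_lt hx0ge (hxm 0 (j+1) (by omega) (by omega))
            have h1 : x (j+1) ∉ Set.Iio (a 0) := by simp [not_lt.mpr (le_of_lt hgt)]
            have := hxB (j+1) (by omega)
            rw [mem_union] at this
            simpa [h1] using this
    · -- first bits differ
      obtain ⟨C', hC'S, hC'tr, hC'ind⟩ := IH m (S ∩ Set.Ioi (a 0))
        η (fun j => μ (j+1)) (fun i => a (i+1)) hmono' hS'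
        (by omega) (fun h => absurd h (by omega))
      have hC'Ioi : C' ⊆ Set.Ioi (a 0) := hC'S.trans inter_subset_right
      by_cases hb : η 0 = true
      · have hμ0 : μ 0 = false := by
          cases h : μ 0
          · rfl
          · exact absurd (h.trans hb.symm) he
        refine ⟨C', hC'S.trans inter_subset_left, ?_, ?_⟩
        · intro i hi
          cases i with
          | zero =>
            have h2 : a 0 ∉ C' := fun h => lt_irrefl _ (hC'Ioi h)
            simp [h2, hμ0]
          | succ i => exact hC'tr i (by omega)
        · rintro ⟨x, hxm, hxS, hxB⟩
          have hx0 : x 0 ∈ C' := (hxB 0 (by omega)).mpr hb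
          have hgt : ∀ j ≤ m, a 0 < x j := by
            intro j hj
            rcases Nat.eq_zero_or_pos j with h0 | h0
            · exact h0 ▸ hC'Ioi hx0
            · exact lt_trans (hC'Ioi hx0) (hxm 0 j h0 hj)
          exact hC'ind ⟨x, hxm, fun j hj => ⟨hxS j hj, hgt j hj⟩, hxB⟩
      · have hb' : η 0 = false := by simpa using hb
        have hμ0 : μ 0 = true := by
          cases h : μ 0
          · exact absurd (h.trans hb'.symm) he
          · rfl
        refine ⟨(S ∩ Set.Iic (a 0)) ∪ C',
          union_subset inter_subset_left (hC'S.trans inter_subset_left), ?_, ?_⟩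
        · intro i hi
          cases i with
          | zero =>
            have : a 0 ∈ (S ∩ Set.Iic (a 0)) ∪ C' := Or.inl ⟨ha0S, le_refl _⟩
            simp [this, hμ0]
          | succ i =>
            have hlt : a 0 < a (i+1) := hmono 0 (i+1) (by omega) hi
            have h1 : a (i+1) ∉ Set.Iic (a 0) := by simp [not_le.mpr hlt]
            rw [mem_union]
            simpa [h1] using hC'tr i (by omega)
        · rintro ⟨x, hxm, hxS, hxB⟩
          have hx0 : x 0 ∉ (S ∩ Set.Iic (a 0)) ∪ C' := by
            intro h
            have := (hxB 0 (by omega)).mp h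
            rw [hb'] at this
            exact absurd this (by simp)
          have hx0gt : a 0 < x 0 := by
            by_contra hlt
            exact hx0 (Or.inl ⟨hxS 0 (by omega), not_lt.mp hlt⟩)
          have hgt : ∀ j ≤ m, a 0 < x j := by
            intro j hj
            rcases Nat.eq_zero_or_pos j with h0 | h0
            · exact h0 ▸ hx0gt
            · exact lt_trans hx0gt (hxm 0 j h0 hj)
          apply hC'ind
          refine ⟨x, hxm, fun j hj => ⟨hxS j hj, hgt j hj⟩, ?_⟩
          intro j hj
          have h1 : x j ∉ Set.Iic (a 0) := by simp [not_le.mpr (hgt j hj)]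
          have := hxB j hj
          rw [mem_union] at this
          simpa [h1] using this

/-- The forbidden label of the pattern-avoiding family on a `(d+1)`-element set
is exactly the subset coded by `η`. -/
theorem forbidden_label_of_avoiders [LinearOrder α] (d : ℕ) (η : Fin (d + 1) → Bool)
    (a : Fin (d + 1) → α) (ha : StrictMono a) (A : Set α) (hA : A = Set.range a) :
    (a '' {i | η i = true}) ∉ trace {B : Set α | ¬ induces B η} A ∧
      ∀ s : Set α, s ⊆ A → s ≠ a '' {i | η i = true} →
        s ∈ trace {B : Set α | ¬ induces B η} A := by
  classical
  constructor
  · rintro ⟨C, hC, heq⟩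
    apply hC
    refine ⟨a, ha, fun j => ?_⟩
    constructor
    · intro hj
      have hmem : a j ∈ C ∩ A := ⟨hj, by rw [hA]; exact mem_range_self j⟩
      rw [← heq] at hmem
      obtain ⟨i, hi, hij⟩ := hmem
      rwa [← ha.injective hij]
    · intro hj
      have hmem : a j ∈ a '' {i | η i = true} := ⟨j, hj, rfl⟩
      rw [heq] at hmem
      exact hmem.1
  · intro s hsA hsne
    have hdiff : ∃ j : Fin (d+1), ¬ (a j ∈ s ↔ η j = true) := by
      by_contra h
      simp only [not_exists, not_not] at h
      apply hsne
      apply Set.Subset.antisymm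
      · intro x hx
        have hxA : x ∈ Set.range a := by rw [← hA]; exact hsA hx
        obtain ⟨i, rfl⟩ := hxA
        exact ⟨i, (h i).mp hx, rfl⟩
      · rintro x ⟨i, hi, rfl⟩
        exact (h i).mpr hi
    obtain ⟨C, _, hCtr, hCind⟩ := key (d+1) d (Set.univ)
      (fun n => η ⟨min n d, by omega⟩)
      (fun n => decide (a ⟨min n d, by omega⟩ ∈ s))
      (fun n => a ⟨min n d, by omega⟩)
      (fun i j hij hj => by
        have h1 : min i d = i := by omega
        have h2 : min j d = j := by omega
        exact ha (by simp [h1, h2]; omega))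
      (fun i _ => mem_univ _)
      (by omega)
      (fun _ => by
        obtain ⟨i, hi⟩ := hdiff
        refine ⟨i.val, by omega, ?_⟩
        have h1 : min i.val d = i.val := by omega
        simp only [h1, Fin.eta]
        intro hEq
        apply hi
        rw [← hEq, decide_eq_true_eq])
    have hstep : ∀ i : Fin (d+1), (a i ∈ C ↔ a i ∈ s) := by
      intro i
      have h2 : min i.val d = i.val := by omega
      have := hCtr i.val i.isLt
      simpa only [h2, Fin.eta, decide_eq_true_eq] using this
    refine ⟨C, ?_, ?_⟩
    · rintro ⟨x, hx, hxB⟩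
      apply hCind
      refine ⟨fun n => x ⟨min n d, by omega⟩, ?_, fun _ _ => mem_univ _, ?_⟩
      · intro i j hij hj
        apply hx
        have h1 : min i d = i := by omega
        have h2 : min j d = j := by omega
        simp [h1, h2]; omega
      · intro j hj
        exact hxB _
    · apply Set.Subset.antisymm
      · intro x hx
        have hxA : x ∈ Set.range a := by rw [← hA]; exact hsA hx
        obtain ⟨i, rfl⟩ := hxA
        exact ⟨(hstep i).mpr hx, by rw [hA]; exact mem_range_self i⟩
      · rintro x ⟨hxC, hxA⟩
        rw [hA] at hxA
        obtain ⟨i, rfl⟩ := hxA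
        exact (hstep i).mp hxC
end

section
/- If 𝒞 ⊆ 𝒫(X) is a d-maximum set system on a finite set X, then for any C₁, C₂ ∈ 𝒞, the Hamming distance |C₁ Δ C₂| equals the graph distance between C₁ and C₂ in the one-inclusion graph of 𝒞. In particular the one-inclusion graph of a finite maximum class is connected. -/
open Set

variable {α : Type*}

/-- The one-inclusion graph of a set system. -/
def oneInclusionGraph (𝒞 : Set (Set α)) : SimpleGraph 𝒞 where
  Adj C₁ C₂ := (symmDiff (C₁ : Set α) (C₂ : Set α)).ncard = 1
  symm := by
    constructor
    intro C₁ C₂ h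
    rwa [symmDiff_comm]
  loopless := by
    constructor
    intro C h
    simp [symmDiff_self] at h

/-!
Every `d`-maximum class on a finite ground set is *extremal*: by Pajor's lemma it has at most as
many members as shattered sets, while its shattered sets have size at most `d`, and there are
exactly `|𝒞|` such sets. Splitting an extremal class along a coordinate `z` gives two extremal
halves: by Pajor's lemma for each half, it suffices that the shattered sets of the halves,
counted with multiplicity, inject into those of `𝒞` (a set shattered by both halves gives itself
and `insert z` of itself).

In an extremal class, from any member `C` one can step to a neighbour closer to another member
`C'`, by induction on `|𝒞|`. If some member `D ≠ C` with `C ∆ D ⊆ C ∆ C'` agrees with `C` at a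
coordinate `z` where another member differs from `C`, step towards `D` inside the half of `𝒞`
through `C` at `z`. Such `D` and `z` exist (`D = C'` if a member leaves the subcube spanned by
`C` and `C'`, otherwise any third member) unless `𝒞 = {C, C'}`; but `{C, C'}` shatters `∅` and
every singleton of `C ∆ C'`, so then extremality forces `C ∆ C' = {x}`. Iterating the step
gives a path of length `|C₁ ∆ C₂|`, and no path can be shorter.
-/

open scoped symmDiff

def shatteredSets (𝒞 : Set (Set α)) : Set (Set α) := {S | shatters 𝒞 S}

def IsExtremal (𝒞 : Set (Set α)) : Prop := 𝒞.ncard = (shatteredSets 𝒞).ncard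

lemma Set.notMem_symmDiff {β : Type*} {a : β} {s t : Set β} : a ∉ s ∆ t ↔ (a ∈ s ↔ a ∈ t) := by
  rw [mem_symmDiff]
  tauto

lemma Set.ncard_sep_lt {β : Type*} {s : Set β} {p : β → Prop} {x : β} (hx : x ∈ s)
    (hpx : ¬ p x) (hs : s.Finite := by toFinite_tac) : {y ∈ s | p y}.ncard < s.ncard :=
  ncard_lt_ncard ((ssubset_iff_of_subset (sep_subset s p)).2 ⟨x, hx, fun h ↦ hpx h.2⟩) hs

section Shatters

variable {𝒞 𝒟 : Set (Set α)} {S : Set α} {z : α}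

lemma shatters.mono (h : 𝒞 ⊆ 𝒟) (hS : shatters 𝒞 S) : shatters 𝒟 S :=
  fun B hB ↦ (hS B hB).imp fun _ hC ↦ ⟨h hC.1, hC.2⟩

lemma shatters_empty_of_mem {C : Set α} (hC : C ∈ 𝒞) : shatters 𝒞 ∅ :=
  fun B hB ↦ ⟨C, hC, by rw [inter_empty, subset_empty_iff.1 hB]⟩

lemma shatters.exists_mem_and_exists_notMem (hS : shatters 𝒞 S) (hz : z ∈ S) :
    (∃ C ∈ 𝒞, z ∈ C) ∧ ∃ C ∈ 𝒞, z ∉ C := by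
  obtain ⟨C, hC, hCS⟩ := hS S subset_rfl
  obtain ⟨C', hC', hC'S⟩ := hS ∅ (empty_subset S)
  exact ⟨⟨C, hC, (hCS ▸ hz).1⟩, ⟨C', hC', fun h ↦ (hC'S ▸ mem_inter h hz : z ∈ (∅ : Set α))⟩⟩

lemma shatters_singleton_of_mem_symmDiff {C C' : Set α} {x : α} (hC : C ∈ 𝒞) (hC' : C' ∈ 𝒞)
    (hx : x ∈ C ∆ C') : shatters 𝒞 {x} := by
  intro B hB
  rcases subset_singleton_iff_eq.1 hB with rfl | rfl <;> rcases hx with ⟨h, h'⟩ | ⟨h, h'⟩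
  exacts [⟨C', hC', by simpa⟩, ⟨C, hC, by simpa⟩, ⟨C, hC, by simpa⟩, ⟨C', hC', by simpa⟩]

lemma shatters_insert (h₀ : shatters {C ∈ 𝒞 | z ∉ C} S) (h₁ : shatters {C ∈ 𝒞 | z ∈ C} S) :
    shatters 𝒞 (insert z S) := by
  intro B hB
  by_cases hzB : z ∈ B
  · obtain ⟨C, ⟨hC, hzC⟩, hCS⟩ := h₁ (B \ {z}) (sdiff_singleton_subset_iff.2 hB)
    refine ⟨C, hC, ?_⟩
    rw [inter_insert_of_mem hzC, hCS, insert_sdiff_singleton, insert_eq_of_mem hzB]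
  · obtain ⟨C, ⟨hC, hzC⟩, hCS⟩ := h₀ B ((subset_insert_iff_of_notMem hzB).1 hB)
    exact ⟨C, hC, by rw [inter_insert_of_notMem hzC, hCS]⟩

end Shatters

section Extremal

variable [Finite α]

lemma ncard_sep_mem_add_ncard_sep_notMem (𝒞 : Set (Set α)) (z : α) :
    {C ∈ 𝒞 | z ∈ C}.ncard + {C ∈ 𝒞 | z ∉ C}.ncard = 𝒞.ncard :=
  ncard_inter_add_ncard_sdiff_eq_ncard 𝒞 {C | z ∈ C}

lemma ncard_shatteredSets_add_le (𝒞 : Set (Set α)) (z : α) :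
    (shatteredSets {C ∈ 𝒞 | z ∉ C}).ncard + (shatteredSets {C ∈ 𝒞 | z ∈ C}).ncard ≤
      (shatteredSets 𝒞).ncard := by
  set 𝒮₀ := shatteredSets {C ∈ 𝒞 | z ∉ C}
  set 𝒮₁ := shatteredSets {C ∈ 𝒞 | z ∈ C}
  have hz₀ : ∀ S ∈ 𝒮₀, z ∉ S := fun S hS hz ↦
    let ⟨_, ⟨_, hzC⟩, h⟩ := (hS.exists_mem_and_exists_notMem hz).1; hzC h
  have hz₁ : ∀ S ∈ 𝒮₁, z ∉ S := fun S hS hz ↦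
    let ⟨_, ⟨_, hzC⟩, h⟩ := (hS.exists_mem_and_exists_notMem hz).2; h hzC
  have hunion : 𝒮₀ ∪ 𝒮₁ ⊆ shatteredSets 𝒞 :=
    union_subset (fun _ hS ↦ hS.mono (sep_subset _ _)) (fun _ hS ↦ hS.mono (sep_subset _ _))
  have hinsert : insert z '' (𝒮₀ ∩ 𝒮₁) ⊆ shatteredSets 𝒞 := by
    rintro _ ⟨S, ⟨h₀, h₁⟩, rfl⟩
    exact shatters_insert h₀ h₁
  have hdisj : Disjoint (𝒮₀ ∪ 𝒮₁) (insert z '' (𝒮₀ ∩ 𝒮₁)) := by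
    refine disjoint_left.2 ?_
    rintro _ (hS | hS) ⟨T, -, rfl⟩
    exacts [hz₀ _ hS (mem_insert z T), hz₁ _ hS (mem_insert z T)]
  have hinj : InjOn (insert z) (𝒮₀ ∩ 𝒮₁) := fun S hS T hT hST ↦ by
    rw [← insert_sdiff_self_of_notMem (hz₀ S hS.1), hST, insert_sdiff_self_of_notMem (hz₀ T hT.1)]
  calc 𝒮₀.ncard + 𝒮₁.ncard = (𝒮₀ ∪ 𝒮₁).ncard + (insert z '' (𝒮₀ ∩ 𝒮₁)).ncard := by
        rw [hinj.ncard_image, ncard_union_add_ncard_inter]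
    _ = (𝒮₀ ∪ 𝒮₁ ∪ insert z '' (𝒮₀ ∩ 𝒮₁)).ncard := (ncard_union_eq hdisj).symm
    _ ≤ (shatteredSets 𝒞).ncard := ncard_le_ncard (union_subset hunion hinsert)

/-- Pajor's lemma. -/
theorem ncard_le_ncard_shatteredSets (𝒞 : Set (Set α)) : 𝒞.ncard ≤ (shatteredSets 𝒞).ncard := by
  induction hn : 𝒞.ncard using Nat.strong_induction_on generalizing 𝒞 with
  | _ n ih =>
  rcases 𝒞.subsingleton_or_nontrivial with h𝒞 | ⟨C, hC, C', hC', hne⟩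
  · rcases h𝒞.eq_empty_or_singleton with rfl | ⟨C, rfl⟩
    · simp [← hn]
    · rw [← hn, ncard_singleton]
      exact (ncard_pos).2 ⟨∅, shatters_empty_of_mem (mem_singleton C)⟩
  · obtain ⟨z, hz⟩ := symmDiff_nonempty.2 hne
    obtain ⟨⟨D, hD, hzD⟩, E, hE, hzE⟩ := (shatters_singleton_of_mem_symmDiff hC hC' hz)
      |>.exists_mem_and_exists_notMem (mem_singleton z)
    have ih₀ := ih _ (hn ▸ ncard_sep_lt hD (not_not_intro hzD)) {C ∈ 𝒞 | z ∉ C} rfl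
    have ih₁ := ih _ (hn ▸ ncard_sep_lt hE hzE) {C ∈ 𝒞 | z ∈ C} rfl
    have := ncard_shatteredSets_add_le 𝒞 z
    have := ncard_sep_mem_add_ncard_sep_notMem 𝒞 z
    omega

lemma IsExtremal.sep_notMem_and_sep_mem {𝒞 : Set (Set α)} (h : IsExtremal 𝒞) (z : α) :
    IsExtremal {C ∈ 𝒞 | z ∉ C} ∧ IsExtremal {C ∈ 𝒞 | z ∈ C} := by
  have := ncard_le_ncard_shatteredSets {C ∈ 𝒞 | z ∉ C}
  have := ncard_le_ncard_shatteredSets {C ∈ 𝒞 | z ∈ C}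
  have := ncard_shatteredSets_add_le 𝒞 z
  have := ncard_sep_mem_add_ncard_sep_notMem 𝒞 z
  unfold IsExtremal at *
  omega

lemma IsExtremal.sep_mem_iff {𝒞 : Set (Set α)} (h : IsExtremal 𝒞) (z : α) (P : Set α) :
    IsExtremal {C ∈ 𝒞 | z ∈ C ↔ z ∈ P} := by
  by_cases hz : z ∈ P
  · simpa [hz] using (h.sep_notMem_and_sep_mem z).2
  · simpa [hz] using (h.sep_notMem_and_sep_mem z).1

end Extremal

section Maximum

lemma binLe_lt_two_pow {n d : ℕ} (h : d < n) : binLe n d < 2 ^ n := by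
  rw [binLe, ← Nat.sum_range_choose]
  refine Finset.sum_lt_sum_of_subset (i := n) ?_ (by simp) (by simp; omega) (by simp) (by simp)
  exact Finset.range_subset_range.2 (by omega)

lemma ncard_setOf_ncard_lt [Finite α] (k : ℕ) :
    {S : Set α | S.ncard < k}.ncard = ∑ i ∈ Finset.range k, (Nat.card α).choose i := by
  induction k with
  | zero => simp
  | succ k ih =>
    have hsplit : {S : Set α | S.ncard < k + 1} =
        {S | S.ncard < k} ∪ {S | S ⊆ univ ∧ S.ncard = k} := by
      ext S; simp only [mem_ofPred_eq, mem_union, subset_univ, true_and]; omega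
    rw [hsplit, ncard_union_eq, ih, ncard_powerset_ncard finite_univ, ncard_univ,
      Finset.sum_range_succ]
    exact disjoint_left.2 fun S h h' ↦ h.ne h'.2

lemma trace_univ (𝒞 : Set (Set α)) : trace 𝒞 univ = 𝒞 := by
  simp [trace]

lemma trace_eq_powerset_of_shatters {𝒞 : Set (Set α)} {A : Set α} (h : shatters 𝒞 A) :
    trace 𝒞 A = 𝒫 A := by
  refine Subset.antisymm ?_ fun B hB ↦ ?_
  · rintro _ ⟨C, -, rfl⟩
    exact inter_subset_right
  · obtain ⟨C, hC, hCB⟩ := h B hB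
    exact ⟨C, hC, hCB.symm⟩

lemma isMaximum.ncard_le_of_shatters {𝒞 : Set (Set α)} {d : ℕ} (hmax : isMaximum 𝒞 d)
    {A : Set α} (hA : A.Finite) (h : shatters 𝒞 A) : A.ncard ≤ d := by
  by_contra! hd
  have := hmax A hA
  rw [trace_eq_powerset_of_shatters h, ncard_powerset A hA] at this
  exact (binLe_lt_two_pow hd).ne' this

lemma isMaximum.isExtremal [Finite α] {𝒞 : Set (Set α)} {d : ℕ} (hmax : isMaximum 𝒞 d) :
    IsExtremal 𝒞 := by
  refine (ncard_le_ncard_shatteredSets 𝒞).antisymm ?_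
  calc (shatteredSets 𝒞).ncard ≤ {S : Set α | S.ncard < d + 1}.ncard :=
        ncard_le_ncard fun S hS ↦ Nat.lt_succ_of_le (hmax.ncard_le_of_shatters (toFinite S) hS)
    _ = 𝒞.ncard := by
        rw [ncard_setOf_ncard_lt, ← binLe, ← ncard_univ, ← hmax univ finite_univ, trace_univ]

end Maximum

section Step

variable [Finite α] {𝒞 : Set (Set α)} {C C' : Set α}

lemma IsExtremal.subsingleton_symmDiff_of_subset_pair (h : IsExtremal 𝒞) (hC : C ∈ 𝒞)
    (hC' : C' ∈ 𝒞) (h𝒞 : 𝒞 ⊆ {C, C'}) : (C ∆ C').Subsingleton := by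
  intro x hx y hy
  by_contra hxy
  have hsub : ({∅, {x}, {y}} : Set (Set α)) ⊆ shatteredSets 𝒞 := by
    rintro _ (rfl | rfl | rfl)
    exacts [shatters_empty_of_mem hC, shatters_singleton_of_mem_symmDiff hC hC' hx,
      shatters_singleton_of_mem_symmDiff hC hC' hy]
  have h3 : ({∅, {x}, {y}} : Set (Set α)).ncard = 3 :=
    ncard_eq_three.2 ⟨_, _, _, (singleton_nonempty x).ne_empty.symm,
      (singleton_nonempty y).ne_empty.symm, by simpa using hxy, rfl⟩
  have := (ncard_le_ncard hsub).trans_eq h.symm |>.trans (ncard_le_ncard h𝒞)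
  have := ncard_insert_le C {C'}
  rw [ncard_singleton] at this
  omega

theorem IsExtremal.exists_symmDiff_singleton_mem (h : IsExtremal 𝒞) (hC : C ∈ 𝒞) (hC' : C' ∈ 𝒞)
    (hne : C ≠ C') : ∃ x ∈ C ∆ C', C ∆ {x} ∈ 𝒞 := by
  induction hn : 𝒞.ncard using Nat.strong_induction_on generalizing 𝒞 C' with
  | _ n ih =>
  have towards : ∀ z, ∀ D ∈ 𝒞, D ≠ C → z ∉ C ∆ D → C ∆ D ⊆ C ∆ C' →
      ∀ E ∈ 𝒞, z ∈ C ∆ E → ∃ x ∈ C ∆ C', C ∆ {x} ∈ 𝒞 := by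
    intro z D hD hDC hzD hDC' E hE hzE
    obtain ⟨x, hx, hx𝒞⟩ := ih _ (hn ▸ ncard_sep_lt hE fun h ↦ notMem_symmDiff.2 h.symm hzE)
      (h.sep_mem_iff z C) ⟨hC, Iff.rfl⟩ ⟨hD, (notMem_symmDiff.1 hzD).symm⟩ hDC.symm rfl
    exact ⟨x, hDC' hx, hx𝒞.1⟩
  by_cases hlocal : ∃ E ∈ 𝒞, ¬ C ∆ E ⊆ C ∆ C'
  · obtain ⟨E, hE, hEC'⟩ := hlocal
    obtain ⟨z, hzE, hzC'⟩ := not_subset.1 hEC'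
    exact towards z C' hC' hne.symm hzC' subset_rfl E hE hzE
  push Not at hlocal
  by_cases hthird : ∃ D ∈ 𝒞, D ≠ C ∧ D ≠ C'
  · obtain ⟨D, hD, hDC, hDC'⟩ := hthird
    obtain ⟨z, hzC', hzD⟩ :=
      exists_of_ssubset ((hlocal D hD).ssubset_of_ne (by simpa using hDC'))
    exact towards z D hD hDC hzD (hlocal D hD) C' hC' hzC'
  push Not at hthird
  have h𝒞 : 𝒞 ⊆ {C, C'} := fun D hD ↦ by
    by_cases hDC : D = C
    exacts [Or.inl hDC, Or.inr (hthird D hD hDC)]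
  obtain ⟨x, hx⟩ := symmDiff_nonempty.2 hne
  have hA : C ∆ C' = {x} :=
    (h.subsingleton_symmDiff_of_subset_pair hC hC' h𝒞).eq_singleton_of_mem hx
  exact ⟨x, hx, by rwa [← hA, symmDiff_symmDiff_cancel_left]⟩

end Step

section Walks

variable [Finite α] {𝒞 : Set (Set α)}

lemma ncard_symmDiff_le_length {C₁ C₂ : 𝒞} (p : (oneInclusionGraph 𝒞).Walk C₁ C₂) :
    ((C₁ : Set α) ∆ C₂).ncard ≤ p.length := by
  induction p with
  | nil => simp
  | @cons C D E hCD _ ih =>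
    have hCD : ((C : Set α) ∆ D).ncard = 1 := hCD
    calc ((C : Set α) ∆ E).ncard ≤ ((C : Set α) ∆ D ∪ (D : Set α) ∆ E).ncard :=
          ncard_le_ncard (symmDiff_triangle _ _ _)
      _ ≤ ((C : Set α) ∆ D).ncard + ((D : Set α) ∆ E).ncard := ncard_union_le _ _
      _ ≤ _ := by rw [SimpleGraph.Walk.length_cons]; omega

lemma IsExtremal.exists_walk_length_eq (h : IsExtremal 𝒞) (C₁ C₂ : 𝒞) :
    ∃ p : (oneInclusionGraph 𝒞).Walk C₁ C₂, p.length = ((C₁ : Set α) ∆ C₂).ncard := by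
  induction hk : ((C₁ : Set α) ∆ C₂).ncard generalizing C₁ with
  | zero =>
    obtain rfl : C₁ = C₂ := Subtype.ext (symmDiff_eq_bot.1 ((ncard_eq_zero).1 hk))
    exact ⟨.nil, rfl⟩
  | succ k ih =>
    have hne : (C₁ : Set α) ≠ C₂ := fun he ↦ by simp [he] at hk
    obtain ⟨x, hx, hx𝒞⟩ := h.exists_symmDiff_singleton_mem C₁.2 C₂.2 hne
    let D : 𝒞 := ⟨C₁ ∆ {x}, hx𝒞⟩
    have hadj : (oneInclusionGraph 𝒞).Adj C₁ D := by
      change ((C₁ : Set α) ∆ (C₁ ∆ {x})).ncard = 1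
      rw [symmDiff_symmDiff_cancel_left, ncard_singleton]
    have hD : ((D : Set α) ∆ C₂).ncard = k := by
      change ((C₁ : Set α) ∆ {x} ∆ C₂).ncard = k
      rw [symmDiff_right_comm, symmDiff_of_ge (singleton_subset_iff.2 hx),
        ncard_sdiff_singleton_of_mem hx, hk, Nat.add_sub_cancel]
    obtain ⟨q, hq⟩ := ih D hD
    exact ⟨.cons hadj q, by rw [SimpleGraph.Walk.length_cons, hq]⟩

end Walks

/-- Warmuth–Kuzmin: in a finite maximum class, graph distance in the one-inclusion
graph equals Hamming distance; in particular the graph is connected. -/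
theorem oneInclusion_dist_eq_hamming [Fintype α] (𝒞 : Set (Set α)) (d : ℕ)
    (hmax : isMaximum 𝒞 d) :
    ∀ C₁ C₂ : 𝒞, (oneInclusionGraph 𝒞).Reachable C₁ C₂ ∧
      (oneInclusionGraph 𝒞).dist C₁ C₂ = (symmDiff (C₁ : Set α) (C₂ : Set α)).ncard := by
  intro C₁ C₂
  obtain ⟨p, hp⟩ := hmax.isExtremal.exists_walk_length_eq C₁ C₂
  refine ⟨p.reachable, (hp ▸ SimpleGraph.dist_le p).antisymm ?_⟩
  obtain ⟨q, hq⟩ := p.reachable.exists_walk_length_eq_dist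
  exact hq ▸ ncard_symmDiff_le_length q
end
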